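/- arXiv:2007.15566 — 3 statements merged into one kernel-verified Lean document; each statement's English description precedes it below -/
import Mathlib

section
/- Let μ be a tail invariant measure on the path-space of a generalized Bratteli diagram with incidence matrices (Fₙ), and let μ⁽ⁿ⁾_v be the common measure of any cylinder set of paths from V₀ ending at v ∈ Vₙ. Then Aₙ μ⁽ⁿ⁺¹⁾ = μ⁽ⁿ⁾ for all n, where Aₙ = Fₙᵀ. Conversely, any sequence of nonnegative vectors (μ⁽ⁿ⁾) with Aₙ μ⁽ⁿ⁺¹⁾ = μ⁽ⁿ⁾ determines a unique tail invariant measure on the path-space. -/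
open scoped ENNReal
open MeasureTheory

/-- The path-space of a generalized Bratteli diagram with levels `V n`, edge sets `E n`,
source maps `src n : E n → V n` and range maps `rng n : E n → V (n+1)`. -/
abbrev PathSp {V E : ℕ → Type*} (src : ∀ n, E n → V n) (rng : ∀ n, E n → V (n + 1)) :
    Type _ :=
  {x : ∀ n, E n // ∀ n, rng n (x n) = src (n + 1) (x (n + 1))}

/-- The cylinder set of all infinite paths agreeing with `x` on edges `0, 1, …, n`. -/
def cylSet {V E : ℕ → Type*} (src : ∀ n, E n → V n) (rng : ∀ n, E n → V (n + 1))
    (x : PathSp src rng) (n : ℕ) : Set (PathSp src rng) :=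
  {y | ∀ i ≤ n, y.1 i = x.1 i}

/-- A measure on the path-space is tail invariant if cylinder sets of the same length
with the same terminal vertex have the same measure. -/
def TailInv {V E : ℕ → Type*} [∀ n, MeasurableSpace (E n)]
    (src : ∀ n, E n → V n) (rng : ∀ n, E n → V (n + 1))
    (μ : Measure (PathSp src rng)) : Prop :=
  ∀ (n : ℕ) (x y : PathSp src rng), rng n (x.1 n) = rng n (y.1 n) →
    μ (cylSet src rng x n) = μ (cylSet src rng y n)

/-- The incidence matrix entry `f⁽ⁿ⁾_{v,w}`: the number of edges from `w ∈ V n`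
to `v ∈ V (n+1)`. -/
noncomputable def Fmat {V E : ℕ → Type*} (src : ∀ n, E n → V n)
    (rng : ∀ n, E n → V (n + 1)) (n : ℕ) (v : V (n + 1)) (w : V n) : ℝ≥0∞ :=
  (Nat.card {e : E n // src n e = w ∧ rng n e = v} : ℝ≥0∞)

/-!
Splitting a cylinder according to its next edge, and grouping these edges by their range, gives
`μ⁽ⁿ⁾ = Aₙ μ⁽ⁿ⁺¹⁾`. Conversely, given a solution `(μ⁽ⁿ⁾)`, let `ν_N` put mass `μ⁽ᴺ⁺¹⁾_v` on one
path of each cylinder of length `N + 1` ending at `v`. The same splitting shows that on a set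
determined by the first `M + 1` edges all `ν_N` with `N ≥ M` agree, so their common values form an
additive content on the ring of sets determined at a finite level. It is σ-subadditive by
compactness: up to a set of small measure the edges at each level lie in finite sets, and there
König's lemma turns a countable cover by determined sets into a finite one. Carathéodory's
extension gives the measure; it is unique because the determined sets form a generating ring,
covered by countably many cylinders of finite measure.
-/

open Set Filter Topology

theorem exists_frequently_forall_le_eq {β : ℕ → Type*} (A : ∀ m, Set (β m))
    (hA : ∀ m, (A m).Finite) (y : ℕ → ∀ m, β m) (hy : ∀ J m, m ≤ J → y J m ∈ A m) :
    ∃ z : ∀ m, β m, ∀ M, ∃ᶠ J in atTop, ∀ i ≤ M, y J i = z i := by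
  let _ : ∀ m, TopologicalSpace (β m) := fun _ => ⊥
  have _ : ∀ m, DiscreteTopology (β m) := fun _ => ⟨rfl⟩
  -- Modify `y` beyond the diagonal so that it lies in the compact set `univ.pi A`.
  let y' : ℕ → ∀ m, β m := fun J m => if m ≤ J then y J m else y m m
  have hy' : ∀ J, y' J ∈ univ.pi A := fun J m _ => by
    by_cases h : m ≤ J
    · simpa only [y', if_pos h] using hy J m h
    · simpa only [y', if_neg h] using hy m m le_rfl
  obtain ⟨z, -, hz⟩ := (isCompact_univ_pi fun m => (hA m).isCompact).exists_clusterPt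
    (f := map y' atTop) (tendsto_principal.2 (Eventually.of_forall hy'))
  refine ⟨z, fun M => ?_⟩
  have hnhds : ∀ᶠ w in 𝓝 z, w ∈ (Iic M).pi fun i => {z i} :=
    (isOpen_set_pi (finite_Iic M) fun i _ => isOpen_discrete _).mem_nhds fun i _ => rfl
  refine ((frequently_map.1 (hz.frequently hnhds)).and_eventually (eventually_ge_atTop M)).mono ?_
  exact fun J ⟨hJ, hMJ⟩ i hi => (if_pos (hi.trans hMJ)).symm.trans (hJ i hi)

theorem exists_finset_measure_inter_preimage_compl_le {α β : Type*} [MeasurableSpace α]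
    [MeasurableSpace β] [Countable β] [MeasurableSingletonClass β] (ν : Measure α) {f : α → β}
    (hf : Measurable f) {s : Set α} (hs : ν s ≠ ∞) {ε : ℝ≥0∞} (hε : 0 < ε) :
    ∃ A : Finset β, ν (s ∩ f ⁻¹' (↑A)ᶜ) ≤ ε := by
  have hfib (t : Set β) : ∑' b : t, ν.restrict s (f ⁻¹' {b.1}) = ν.restrict s (f ⁻¹' t) :=
    tsum_measure_preimage_singleton t.to_countable fun b _ => hf (measurableSet_singleton b)
  have htot : ∑' b, ν.restrict s (f ⁻¹' {b}) ≠ ∞ := by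
    rwa [← tsum_univ, hfib, preimage_univ, Measure.restrict_apply_univ]
  obtain ⟨A, hA⟩ :=
    ((ENNReal.tendsto_tsum_compl_atTop_zero htot).eventually (gt_mem_nhds hε)).exists
  refine ⟨A, ?_⟩
  rw [inter_comm, ← Measure.restrict_apply (hf (to_countable _).measurableSet), ← hfib]
  exact hA.le

namespace Bratteli

variable {V E : ℕ → Type*} {src : ∀ n, E n → V n} {rng : ∀ n, E n → V (n + 1)}

lemma mem_cylSet_comm {x y : PathSp src rng} {n : ℕ} :
    y ∈ cylSet src rng x n ↔ x ∈ cylSet src rng y n :=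
  ⟨fun h i hi => (h i hi).symm, fun h i hi => (h i hi).symm⟩

lemma cylSet_zero (x : PathSp src rng) : cylSet src rng x 0 = {y | y.1 0 = x.1 0} := by
  ext y
  exact ⟨fun h => h 0 le_rfl, fun h i hi => Nat.le_zero.1 hi ▸ h⟩

lemma cylSet_inter_coord_eq {x y : PathSp src rng} {n : ℕ} (hy : y ∈ cylSet src rng x n) :
    cylSet src rng x n ∩ {z | z.1 (n + 1) = y.1 (n + 1)} = cylSet src rng y (n + 1) := by
  ext z
  refine ⟨fun ⟨hzx, hzy⟩ i hi => ?_, fun hz => ⟨fun i hi => ?_, hz (n + 1) le_rfl⟩⟩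
  · rcases Nat.lt_succ_iff_lt_or_eq.1 (Nat.lt_succ_of_le hi) with hi | rfl
    · exact (hzx i (by omega)).trans (hy i (by omega)).symm
    · exact hzy
  · exact (hz i (by omega)).trans (hy i hi)

section Extension

variable (hs : ∀ (n : ℕ) (v : V n), ∃ e : E n, src n e = v)

noncomputable def ray (rng : ∀ n, E n → V (n + 1)) (e : E 0) : ∀ i, E i
  | 0 => e
  | i + 1 => (hs (i + 1) (rng i (ray rng e i))).choose

noncomputable def extendChain (rng : ∀ n, E n → V (n + 1)) (N : ℕ) (f : ∀ i, E i) : ∀ i, E i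
  | 0 => f 0
  | i + 1 => if i + 1 ≤ N then f (i + 1) else (hs (i + 1) (rng i (extendChain rng N f i))).choose

lemma extendChain_of_le {N i : ℕ} (f : ∀ i, E i) (hi : i ≤ N) :
    extendChain hs rng N f i = f i := by
  cases i with
  | zero => rfl
  | succ i => exact if_pos hi

lemma extendChain_isChain {N : ℕ} {f : ∀ i, E i}
    (hf : ∀ i < N, rng i (f i) = src (i + 1) (f (i + 1))) (i : ℕ) :
    rng i (extendChain hs rng N f i) = src (i + 1) (extendChain hs rng N f (i + 1)) := by
  by_cases h : i + 1 ≤ N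
  · rw [extendChain_of_le hs f h, extendChain_of_le hs f (by omega)]
    exact hf i h
  · simp only [extendChain, if_neg h]
    exact (hs (i + 1) _).choose_spec.symm

include hs

lemma exists_path_head (e : E 0) : ∃ x : PathSp src rng, x.1 0 = e :=
  ⟨⟨ray hs rng e, fun i => (hs (i + 1) _).choose_spec.symm⟩, rfl⟩

lemma exists_mem_cylSet_succ (x : PathSp src rng) (m : ℕ) {e : E (m + 1)}
    (he : src (m + 1) e = rng m (x.1 m)) : ∃ y ∈ cylSet src rng x m, y.1 (m + 1) = e := by
  set f := Function.update x.1 (m + 1) e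
  have hf : ∀ i < m + 1, rng i (f i) = src (i + 1) (f (i + 1)) := by
    intro i hi
    rcases Nat.lt_succ_iff_lt_or_eq.1 hi with hi | rfl
    · simp only [f, Function.update_of_ne (by omega : i ≠ m + 1),
        Function.update_of_ne (by omega : i + 1 ≠ m + 1)]
      exact x.2 i
    · simp only [f, Function.update_of_ne (by omega : i ≠ i + 1), Function.update_self, he]
  refine ⟨⟨extendChain hs rng (m + 1) f, extendChain_isChain hs hf⟩, fun i hi => ?_, ?_⟩
  · exact (extendChain_of_le hs f (by omega)).trans (Function.update_of_ne (by omega) _ _)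
  · exact (extendChain_of_le hs f le_rfl).trans (Function.update_self _ _ _)

lemma exists_path_through (hr : ∀ (n : ℕ) (v : V (n + 1)), ∃ e : E n, rng n e = v) :
    ∀ (n : ℕ) (e : E n), ∃ x : PathSp src rng, x.1 n = e
  | 0, e => exists_path_head hs e
  | n + 1, e => by
    obtain ⟨e', he'⟩ := hr n (src (n + 1) e)
    obtain ⟨x, hx⟩ := exists_path_through hr n e'
    obtain ⟨y, -, hy⟩ := exists_mem_cylSet_succ hs x n (e := e) (by rw [hx, he'])
    exact ⟨y, hy⟩

end Extension

lemma tsum_src_eq_tsum_Fmat (hfin : ∀ (n : ℕ) (v : V (n + 1)), Finite {e : E n // rng n e = v})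
    (n : ℕ) (w : V n) (g : V (n + 1) → ℝ≥0∞) :
    ∑' e : {e // src n e = w}, g (rng n e) = ∑' v, Fmat src rng n v w * g v := by
  rw [← (Equiv.sigmaFiberEquiv fun e : {e // src n e = w} => rng n e).tsum_eq,
    ENNReal.tsum_sigma']
  refine tsum_congr fun v => ?_
  have hfiber := Equiv.subtypeSubtypeEquivSubtypeInter (fun e => src n e = w) (fun e => rng n e = v)
  have : Finite {e : {e // src n e = w} // rng n e = v} :=
    Finite.of_injective (fun e => (⟨e.1.1, e.2⟩ : {e // rng n e = v}))
      fun a b h => Subtype.ext (Subtype.ext (congrArg Subtype.val h :))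
  refine (tsum_congr fun (e : {e : {e // src n e = w} // rng n e = v}) =>
    (congrArg g e.2 : g (rng n e.1.1) = g v)).trans ?_
  rw [ENNReal.tsum_const, Fmat, ← Nat.card_congr hfiber, ENat.card_eq_coe_natCard]
  rfl

def IsDeterminedAt (N : ℕ) (s : Set (PathSp src rng)) : Prop :=
  ∀ y ∈ s, cylSet src rng y N ⊆ s

variable (src rng) in
def determinedSets : Set (Set (PathSp src rng)) :=
  {s | ∃ N, IsDeterminedAt N s}

lemma IsDeterminedAt.mono {M N : ℕ} {s : Set (PathSp src rng)} (h : IsDeterminedAt M s)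
    (hMN : M ≤ N) : IsDeterminedAt N s :=
  fun y hy _ hz => h y hy fun i hi => hz i (hi.trans hMN)

lemma isDeterminedAt_cylSet (x : PathSp src rng) {k N : ℕ} (hkN : k ≤ N) :
    IsDeterminedAt N (cylSet src rng x k) :=
  fun _ hy _ hz i hi => (hz i (hi.trans hkN)).trans (hy i hi)

lemma isDeterminedAt_coord_mem (N : ℕ) (S : Set (E N)) :
    IsDeterminedAt N {y : PathSp src rng | y.1 N ∈ S} :=
  fun _ hy _ hz => (congrArg (· ∈ S) (hz N le_rfl)).mpr hy

lemma IsDeterminedAt.inter {N : ℕ} {s t : Set (PathSp src rng)} (hs : IsDeterminedAt N s)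
    (ht : IsDeterminedAt N t) : IsDeterminedAt N (s ∩ t) :=
  fun y hy => subset_inter (hs y hy.1) (ht y hy.2)

lemma IsDeterminedAt.union {N : ℕ} {s t : Set (PathSp src rng)} (hs : IsDeterminedAt N s)
    (ht : IsDeterminedAt N t) : IsDeterminedAt N (s ∪ t) :=
  fun y hy => hy.elim (fun hy => (hs y hy).trans subset_union_left)
    fun hy => (ht y hy).trans subset_union_right

lemma IsDeterminedAt.compl {N : ℕ} {s : Set (PathSp src rng)} (hs : IsDeterminedAt N s) :
    IsDeterminedAt N sᶜ :=
  fun _ hy z hz hzs => hy (hs z hzs (mem_cylSet_comm.1 hz))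

lemma isSetRing_determinedSets : IsSetRing (determinedSets src rng) where
  empty_mem := ⟨0, fun _ hy => hy.elim⟩
  union_mem := fun _ _ ⟨M, hs⟩ ⟨N, ht⟩ =>
    ⟨max M N, (hs.mono (le_max_left M N)).union (ht.mono (le_max_right M N))⟩
  sdiff_mem := fun _ _ ⟨M, hs⟩ ⟨N, ht⟩ =>
    ⟨max M N, (hs.mono (le_max_left M N)).inter (ht.mono (le_max_right M N)).compl⟩

variable (src rng) in
def truncSetoid (N : ℕ) : Setoid (PathSp src rng) :=
  Setoid.ker fun y (i : Fin (N + 1)) => y.1 i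

instance [∀ n, Countable (E n)] (N : ℕ) : Countable (Quotient (truncSetoid src rng N)) :=
  (Setoid.kerLift_injective _).countable

lemma mk_eq_mk_iff {N : ℕ} {y z : PathSp src rng} :
    (⟦y⟧ : Quotient (truncSetoid src rng N)) = ⟦z⟧ ↔ z ∈ cylSet src rng y N :=
  Quotient.eq.trans <| Setoid.ker_def.trans
    ⟨fun h i hi => (congrFun h ⟨i, by omega⟩).symm,
      fun h => funext fun i => (h i (Nat.lt_succ_iff.1 i.2)).symm⟩

lemma out_mem_cylSet {N : ℕ} (y : PathSp src rng) :
    (⟦y⟧ : Quotient (truncSetoid src rng N)).out ∈ cylSet src rng y N :=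
  mk_eq_mk_iff.1 (Quotient.out_eq _).symm

lemma preimage_mk_singleton {N : ℕ} (q : Quotient (truncSetoid src rng N)) :
    Quotient.mk _ ⁻¹' {q} = cylSet src rng q.out N := by
  ext z
  conv_lhs => rw [mem_preimage, mem_singleton_iff, ← Quotient.out_eq q, eq_comm]
  exact mk_eq_mk_iff

lemma IsDeterminedAt.preimage_image_mk {N : ℕ} {s : Set (PathSp src rng)}
    (h : IsDeterminedAt N s) : Quotient.mk (truncSetoid src rng N) ⁻¹' (Quotient.mk _ '' s) = s :=
  (subset_preimage_image _ _).antisymm' fun _ ⟨y, hy, hyz⟩ => h y hy (mk_eq_mk_iff.1 hyz)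

lemma exists_subset_escape_union (A : ∀ j, Finset (E j)) {s : Set (PathSp src rng)}
    (hs : s ∈ determinedSets src rng) {t : ℕ → Set (PathSp src rng)}
    (ht : ∀ i, t i ∈ determinedSets src rng) (hcov : s ⊆ ⋃ i, t i) :
    ∃ J, s ⊆ (⋃ j ∈ Finset.range (J + 1), s ∩ {y | y.1 j ∉ A j}) ∪ ⋃ i ∈ Finset.range J, t i := by
  by_contra! hne
  have hbad (J : ℕ) : ∃ y ∈ s, (∀ j ≤ J, y.1 j ∈ A j) ∧ ∀ i < J, y ∉ t i := by
    obtain ⟨y, hys, hy⟩ := not_subset.1 (hne J)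
    simp only [mem_union, mem_iUnion, mem_inter_iff, mem_ofPred_eq, Finset.mem_range,
      not_or, not_exists, not_and, not_not] at hy
    exact ⟨y, hys, fun j hj => hy.1 j (by omega) hys, hy.2⟩
  choose y hys hyA hyt using hbad
  obtain ⟨z, hz⟩ := exists_frequently_forall_le_eq (fun j => (A j : Set (E j)))
    (fun j => (A j).finite_toSet) (fun J => (y J).1) hyA
  replace hz (M N : ℕ) : ∃ J ≥ N, ∀ i ≤ M, (y J).1 i = z i := frequently_atTop.1 (hz M) N
  let zp : PathSp src rng := ⟨z, fun m => by
    obtain ⟨J, -, hJ⟩ := hz (m + 1) 0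
    rw [← hJ m (by omega), ← hJ (m + 1) le_rfl]
    exact (y J).2 m⟩
  obtain ⟨K, hK⟩ := hs
  obtain ⟨J, -, hJ⟩ := hz K 0
  obtain ⟨i, hi⟩ := mem_iUnion.1 (hcov (hK (y J) (hys J) fun l hl => (hJ l hl).symm : zp ∈ s))
  obtain ⟨k, hk⟩ := ht i
  obtain ⟨J', hJ', hJ'z⟩ := hz k (i + 1)
  exact hyt J' i (by omega) (hk zp hi hJ'z)

section Measure

variable [∀ n, MeasurableSpace (E n)]

lemma measurable_coord (n : ℕ) : Measurable fun y : PathSp src rng => y.1 n :=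
  (measurable_pi_apply n).comp measurable_subtype_coe

variable [∀ n, DiscreteMeasurableSpace (E n)]

lemma measurableSet_cylSet (x : PathSp src rng) (n : ℕ) :
    MeasurableSet (cylSet src rng x n) := by
  simp only [cylSet, ofPred_forall]
  exact .iInter fun i => .iInter fun _ => measurable_coord i (.of_discrete (s := {x.1 i}))

noncomputable def approxMeasure (μv : ∀ n, V n → ℝ≥0∞) (N : ℕ) : Measure (PathSp src rng) :=
  Measure.sum fun q : Quotient (truncSetoid src rng N) =>
    μv (N + 1) (rng N (q.out.1 N)) • Measure.dirac q.out

lemma approxMeasure_cylSet_self (μv : ∀ n, V n → ℝ≥0∞) (N : ℕ) (x : PathSp src rng) :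
    approxMeasure μv N (cylSet src rng x N) = μv (N + 1) (rng N (x.1 N)) := by
  have hmeas := measurableSet_cylSet x N
  rw [approxMeasure, Measure.sum_apply _ hmeas, tsum_eq_single ⟦x⟧ fun q hq => ?_]
  · rw [Measure.smul_apply, Measure.dirac_apply_of_mem (out_mem_cylSet x), smul_eq_mul, mul_one,
      out_mem_cylSet x N le_rfl]
  · rw [Measure.smul_apply, Measure.dirac_apply' _ hmeas, indicator_of_notMem, smul_zero]
    exact fun h => hq ((Quotient.out_eq q).symm.trans (mk_eq_mk_iff.2 h).symm)

variable [∀ n, Countable (E n)]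

lemma measure_eq_tsum_inter_coord (ν : Measure (PathSp src rng))
    {n : ℕ} {w : V n} {s : Set (PathSp src rng)} (hs : s ⊆ {y | src n (y.1 n) = w}) :
    ν s = ∑' e : {e // src n e = w}, ν (s ∩ {y | y.1 n = e}) := by
  have hmeas (t : Set (E n)) := measurable_coord (src := src) (rng := rng) n (.of_discrete (s := t))
  calc ν s = ν.restrict s ((fun y => y.1 n) ⁻¹' (src n ⁻¹' {w})) := by
        rw [Measure.restrict_apply (hmeas _)]
        exact congrArg ν (inter_eq_right.2 hs).symm
    _ = ∑' e : ↥(src n ⁻¹' {w}), ν.restrict s ((fun y => y.1 n) ⁻¹' {e.1}) :=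
        (tsum_measure_preimage_singleton (to_countable _) fun e _ => hmeas _).symm
    _ = ∑' e : {e // src n e = w}, ν (s ∩ {y | y.1 n = e}) :=
        tsum_congr fun e => by rw [Measure.restrict_apply (hmeas _), inter_comm]; rfl

lemma IsDeterminedAt.measure_eq_tsum {N : ℕ} {s : Set (PathSp src rng)}
    (h : IsDeterminedAt N s) (ν : Measure (PathSp src rng)) :
    ν s = ∑' q : ↥(Quotient.mk (truncSetoid src rng N) '' s), ν (cylSet src rng q.1.out N) := by
  conv_lhs => rw [← h.preimage_image_mk]
  rw [← tsum_measure_preimage_singleton (to_countable _) fun q _ => ?_]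
  · simp_rw [preimage_mk_singleton]
  · rw [preimage_mk_singleton]
    exact measurableSet_cylSet _ _

lemma IsDeterminedAt.measurableSet {N : ℕ} {s : Set (PathSp src rng)}
    (h : IsDeterminedAt N s) : MeasurableSet s := by
  rw [← h.preimage_image_mk, ← biUnion_preimage_singleton]
  exact .biUnion (to_countable _) fun q _ => preimage_mk_singleton q ▸ measurableSet_cylSet _ _

lemma measurableSpace_eq_generateFrom_determinedSets :
    (inferInstance : MeasurableSpace (PathSp src rng)) =
      MeasurableSpace.generateFrom (determinedSets src rng) := by
  refine le_antisymm ?_ (MeasurableSpace.generateFrom_le fun s ⟨N, h⟩ => h.measurableSet)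
  let _ := MeasurableSpace.generateFrom (determinedSets src rng)
  refine measurable_iff_comap_le.1 (measurable_pi_iff.2 fun i => ?_)
  exact measurable_to_countable' fun e =>
    MeasurableSpace.measurableSet_generateFrom ⟨i, isDeterminedAt_coord_mem i {e}⟩

theorem ext_of_cylSet {ν₁ ν₂ : Measure (PathSp src rng)}
    (h : ∀ (n : ℕ) (x : PathSp src rng), ν₁ (cylSet src rng x n) = ν₂ (cylSet src rng x n))
    (htop : ∀ x : PathSp src rng, ν₁ (cylSet src rng x 0) ≠ ∞) : ν₁ = ν₂ := by
  refine Measure.ext_of_generateFrom_of_cover_subset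
    measurableSpace_eq_generateFrom_determinedSets
    isSetRing_determinedSets.isSetSemiring.isPiSystem
    (T := range fun q : Quotient (truncSetoid src rng 0) => cylSet src rng q.out 0) ?_
    (countable_range _) ?_ ?_ ?_
  · rintro _ ⟨q, rfl⟩
    exact ⟨0, isDeterminedAt_cylSet _ le_rfl⟩
  · refine sUnion_eq_univ_iff.2 fun y => ⟨_, ⟨⟦y⟧, rfl⟩, mem_cylSet_comm.1 (out_mem_cylSet y)⟩
  · rintro _ ⟨q, rfl⟩
    exact htop _
  · rintro s ⟨N, hN⟩
    rw [hN.measure_eq_tsum, hN.measure_eq_tsum]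
    exact tsum_congr fun q => h N _

variable (hs : ∀ (n : ℕ) (v : V n), ∃ e : E n, src n e = v)
  (hfin : ∀ (n : ℕ) (v : V (n + 1)), Finite {e : E n // rng n e = v})
include hs hfin

lemma measure_cylSet_eq_tsum_Fmat (ν : Measure (PathSp src rng)) {n : ℕ}
    (g : V (n + 2) → ℝ≥0∞)
    (hν : ∀ y : PathSp src rng, ν (cylSet src rng y (n + 1)) = g (rng (n + 1) (y.1 (n + 1))))
    (x : PathSp src rng) :
    ν (cylSet src rng x n) = ∑' v, Fmat src rng (n + 1) v (rng n (x.1 n)) * g v := by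
  rw [measure_eq_tsum_inter_coord ν (w := rng n (x.1 n))
    fun y (hy : y ∈ cylSet src rng x n) => (y.2 n).symm.trans (congrArg (rng n) (hy n le_rfl)),
    ← tsum_src_eq_tsum_Fmat hfin]
  refine tsum_congr fun e => ?_
  obtain ⟨y, hy, hye⟩ := exists_mem_cylSet_succ hs x n e.2
  rw [← hye, cylSet_inter_coord_eq hy, hν]

theorem eq_tsum_Fmat_of_measure_cylSet (hr : ∀ (n : ℕ) (v : V (n + 1)), ∃ e : E n, rng n e = v)
    (μ : Measure (PathSp src rng)) (μv : ∀ n, V n → ℝ≥0∞)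
    (hcyl : ∀ (n : ℕ) (x : PathSp src rng), μ (cylSet src rng x n) = μv (n + 1) (rng n (x.1 n)))
    (h0 : ∀ v : V 0, μv 0 v = μ {y : PathSp src rng | src 0 (y.1 0) = v}) :
    ∀ (n : ℕ) (w : V n), μv n w = ∑' v : V (n + 1), Fmat src rng n v w * μv (n + 1) v
  | 0, w => by
    rw [h0, measure_eq_tsum_inter_coord μ subset_rfl, ← tsum_src_eq_tsum_Fmat hfin]
    refine tsum_congr fun e => ?_
    obtain ⟨x, hx⟩ := exists_path_head (rng := rng) hs e.1
    have hsub : {y : PathSp src rng | y.1 0 = e} ⊆ {y | src 0 (y.1 0) = w} :=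
      fun y (hy : y.1 0 = e) => (congrArg (src 0) hy).trans e.2
    rw [inter_eq_right.2 hsub, ← hx, ← cylSet_zero, hcyl]
  | m + 1, w => by
    obtain ⟨e, rfl⟩ := hr m w
    obtain ⟨x, rfl⟩ := exists_path_through hs hr m e
    rw [← hcyl, measure_cylSet_eq_tsum_Fmat hs hfin μ _ (hcyl (m + 1))]

variable {μv : ∀ n, V n → ℝ≥0∞}
  (hrec : ∀ (n : ℕ) (w : V n), μv n w = ∑' v, Fmat src rng n v w * μv (n + 1) v)
include hrec

lemma approxMeasure_succ_cylSet (N : ℕ) (x : PathSp src rng) :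
    approxMeasure μv (N + 1) (cylSet src rng x N) = μv (N + 1) (rng N (x.1 N)) := by
  rw [measure_cylSet_eq_tsum_Fmat hs hfin _ _ (approxMeasure_cylSet_self μv (N + 1)), hrec]

lemma approxMeasure_eq_of_isDeterminedAt {M N : ℕ} {s : Set (PathSp src rng)}
    (h : IsDeterminedAt M s) (hMN : M ≤ N) : approxMeasure μv N s = approxMeasure μv M s := by
  induction N, hMN using Nat.le_induction with
  | base => rfl
  | succ N hMN ih =>
    rw [← ih, (h.mono hMN).measure_eq_tsum, (h.mono hMN).measure_eq_tsum (approxMeasure μv N)]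
    exact tsum_congr fun q => by
      rw [approxMeasure_succ_cylSet hs hfin hrec, approxMeasure_cylSet_self]

lemma approxMeasure_cylSet {k N : ℕ} (hkN : k ≤ N) (x : PathSp src rng) :
    approxMeasure μv N (cylSet src rng x k) = μv (k + 1) (rng k (x.1 k)) := by
  rw [approxMeasure_eq_of_isDeterminedAt hs hfin hrec (isDeterminedAt_cylSet x le_rfl) hkN,
    approxMeasure_cylSet_self]

lemma approxMeasure_eq_approxMeasure {M N : ℕ} {s : Set (PathSp src rng)}
    (hM : IsDeterminedAt M s) (hN : IsDeterminedAt N s) :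
    approxMeasure μv M s = approxMeasure μv N s :=
  (approxMeasure_eq_of_isDeterminedAt hs hfin hrec hM (le_max_left M N)).symm.trans
    (approxMeasure_eq_of_isDeterminedAt hs hfin hrec hN (le_max_right M N))

open Classical in
noncomputable def pathContent : AddContent ℝ≥0∞ (determinedSets src rng) :=
  isSetRing_determinedSets.addContent_of_union
    (fun s => if h : ∃ N, IsDeterminedAt N s then approxMeasure μv h.choose s else 0)
    (by split_ifs <;> simp)
    fun {s t} ⟨M, hs'⟩ ⟨N, ht'⟩ hst => by
      have hst' := (hs'.mono (le_max_left M N)).union (ht'.mono (le_max_right M N))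
      have choose_eq {K u} (h : ∃ N, IsDeterminedAt N u) (hK : IsDeterminedAt K u) :
          approxMeasure μv h.choose u = approxMeasure μv K u :=
        approxMeasure_eq_approxMeasure hs hfin hrec h.choose_spec hK
      rw [dif_pos ⟨_, hst'⟩, dif_pos ⟨M, hs'⟩, dif_pos ⟨N, ht'⟩, choose_eq _ hst',
        choose_eq _ (hs'.mono (le_max_left M N)), choose_eq _ (ht'.mono (le_max_right M N)),
        measure_union hst ht'.measurableSet]

lemma pathContent_eq {N : ℕ} {s : Set (PathSp src rng)} (h : IsDeterminedAt N s) :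
    pathContent hs hfin hrec s = approxMeasure μv N s :=
  (dif_pos ⟨N, h⟩).trans
    (approxMeasure_eq_approxMeasure hs hfin hrec (⟨N, h⟩ : ∃ N, IsDeterminedAt N s).choose_spec h)

lemma tsum_pathContent_inter_cylSet_le {N : ℕ} {s t : Set (PathSp src rng)}
    (hsN : IsDeterminedAt N s) (ht : t ∈ determinedSets src rng) :
    ∑' q : ↥(Quotient.mk (truncSetoid src rng N) '' s),
        pathContent hs hfin hrec (t ∩ cylSet src rng q.1.out N) ≤ pathContent hs hfin hrec t := by
  obtain ⟨M, hM⟩ := ht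
  set ν : Measure (PathSp src rng) := approxMeasure μv (max M N)
  calc ∑' q : ↥(Quotient.mk (truncSetoid src rng N) '' s),
        pathContent hs hfin hrec (t ∩ cylSet src rng q.1.out N)
      = ∑' q : ↥(Quotient.mk (truncSetoid src rng N) '' s),
          ν.restrict t (cylSet src rng q.1.out N) := tsum_congr fun q => by
        rw [pathContent_eq hs hfin hrec ((hM.mono (le_max_left M N)).inter
          (isDeterminedAt_cylSet _ (le_max_right M N))), Measure.restrict_apply
          (measurableSet_cylSet _ _), inter_comm]
    _ = ν.restrict t s := (hsN.measure_eq_tsum _).symm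
    _ ≤ ν t := by
        rw [Measure.restrict_apply hsN.measurableSet]
        exact measure_mono inter_subset_right
    _ = pathContent hs hfin hrec t := (pathContent_eq hs hfin hrec (hM.mono (le_max_left M N))).symm

variable (htop : ∀ (n : ℕ) (v : V n), μv n v ≠ ⊤)
include htop

lemma le_tsum_pathContent_of_cylSet_subset (x : PathSp src rng) (n : ℕ)
    {t : ℕ → Set (PathSp src rng)} (ht : ∀ i, t i ∈ determinedSets src rng)
    (hcov : cylSet src rng x n ⊆ ⋃ i, t i) :
    μv (n + 1) (rng n (x.1 n)) ≤ ∑' i, pathContent hs hfin hrec (t i) := by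
  refine ENNReal.le_of_forall_pos_le_add fun ε hε _ => ?_
  obtain ⟨δ, hδ, hδε⟩ := ENNReal.exists_pos_sum_of_countable' (ENNReal.coe_ne_zero.2 hε.ne') ℕ
  have htight (j : ℕ) : ∃ A : Finset (E j),
      approxMeasure μv (max j n) (cylSet src rng x n ∩ {y | y.1 j ∉ A}) ≤ δ j := by
    refine exists_finset_measure_inter_preimage_compl_le _ (measurable_coord j) ?_ (hδ j)
    rw [approxMeasure_cylSet hs hfin hrec (le_max_right j n)]
    exact htop _ _
  choose A hA using htight
  obtain ⟨J, hJ⟩ := exists_subset_escape_union A ⟨n, isDeterminedAt_cylSet x le_rfl⟩ ht hcov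
  choose k hk using ht
  set N := max (max J n) ((Finset.range J).sup k)
  calc μv (n + 1) (rng n (x.1 n)) = approxMeasure μv N (cylSet src rng x n) :=
        (approxMeasure_cylSet hs hfin hrec (by omega) x).symm
    _ ≤ ∑ j ∈ Finset.range (J + 1), approxMeasure μv N (cylSet src rng x n ∩ {y | y.1 j ∉ A j})
          + ∑ i ∈ Finset.range J, approxMeasure μv N (t i) :=
        (measure_mono hJ).trans <| (measure_union_le _ _).trans <|
          add_le_add (measure_biUnion_finset_le _ _) (measure_biUnion_finset_le _ _)
    _ ≤ ∑ j ∈ Finset.range (J + 1), δ j + ∑ i ∈ Finset.range J, pathContent hs hfin hrec (t i) := by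
        refine add_le_add (Finset.sum_le_sum fun j hj => ?_) (Finset.sum_le_sum fun i hi => ?_)
        · have hdet : IsDeterminedAt (max j n) (cylSet src rng x n ∩ {y | y.1 j ∉ A j}) :=
            (isDeterminedAt_cylSet x (le_max_right j n)).inter
              ((isDeterminedAt_coord_mem j (A j : Set (E j))ᶜ).mono (le_max_left j n))
          rw [approxMeasure_eq_of_isDeterminedAt hs hfin hrec hdet
            (by have := Finset.mem_range.1 hj; omega)]
          exact hA j
        · rw [pathContent_eq hs hfin hrec ((hk i).mono
            ((Finset.le_sup hi).trans (le_max_right _ _)))]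
    _ ≤ ε + ∑' i, pathContent hs hfin hrec (t i) :=
        add_le_add ((ENNReal.sum_le_tsum _).trans hδε.le) (ENNReal.sum_le_tsum _)
    _ = ∑' i, pathContent hs hfin hrec (t i) + ε := add_comm _ _

theorem isSigmaSubadditive_pathContent : (pathContent hs hfin hrec).IsSigmaSubadditive := by
  rintro f hf ⟨N, hN⟩
  set Q := Quotient.mk (truncSetoid src rng N) '' ⋃ i, f i
  have hQ (q : Q) : cylSet src rng q.1.out N ⊆ ⋃ i, f i := by
    rw [← preimage_mk_singleton, ← hN.preimage_image_mk]
    exact preimage_mono (singleton_subset_iff.2 q.2)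
  have hcyl (q : Q) : cylSet src rng q.1.out N ∈ determinedSets src rng :=
    ⟨N, isDeterminedAt_cylSet _ le_rfl⟩
  calc pathContent hs hfin hrec (⋃ i, f i)
      = ∑' q : Q, approxMeasure μv N (cylSet src rng q.1.out N) := by
        rw [pathContent_eq hs hfin hrec hN, hN.measure_eq_tsum]
    _ ≤ ∑' (q : Q) (i : ℕ), pathContent hs hfin hrec (f i ∩ cylSet src rng q.1.out N) :=
        ENNReal.tsum_le_tsum fun q => by
          rw [approxMeasure_cylSet_self]
          refine le_tsum_pathContent_of_cylSet_subset hs hfin hrec htop _ _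
            (fun i => isSetRing_determinedSets.inter_mem (hf i) (hcyl q)) ?_
          rw [← iUnion_inter]
          exact subset_inter (hQ q) subset_rfl
    _ = ∑' (i : ℕ) (q : Q), pathContent hs hfin hrec (f i ∩ cylSet src rng q.1.out N) :=
        ENNReal.tsum_comm
    _ ≤ ∑' i, pathContent hs hfin hrec (f i) :=
        ENNReal.tsum_le_tsum fun i => tsum_pathContent_inter_cylSet_le hs hfin hrec hN (hf i)

theorem exists_measure_cylSet_eq : ∃ μ : Measure (PathSp src rng),
    ∀ (n : ℕ) (x : PathSp src rng), μ (cylSet src rng x n) = μv (n + 1) (rng n (x.1 n)) :=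
  ⟨(pathContent hs hfin hrec).measure isSetRing_determinedSets.isSetSemiring
      measurableSpace_eq_generateFrom_determinedSets.le
      (isSigmaSubadditive_pathContent hs hfin hrec htop),
    fun n x => by
      rw [AddContent.measure_eq _ _ measurableSpace_eq_generateFrom_determinedSets _
        ⟨n, isDeterminedAt_cylSet x le_rfl⟩, pathContent_eq hs hfin hrec
        (isDeterminedAt_cylSet x le_rfl), approxMeasure_cylSet_self]⟩

end Measure

end Bratteli

theorem tail_invariant_measures_correspond_to_vector_sequences_general
    {V E : ℕ → Type*} [∀ n, Countable (E n)]
    [∀ n, MeasurableSpace (E n)] [∀ n, DiscreteMeasurableSpace (E n)]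
    (src : ∀ n, E n → V n) (rng : ∀ n, E n → V (n + 1))
    (hfin : ∀ (n : ℕ) (v : V (n + 1)), Finite {e : E n // rng n e = v})
    (hr : ∀ (n : ℕ) (v : V (n + 1)), ∃ e : E n, rng n e = v)
    (hs : ∀ (n : ℕ) (v : V n), ∃ e : E n, src n e = v) :
    (∀ μ : Measure (PathSp src rng), IsProbabilityMeasure μ → TailInv src rng μ →
      ∀ μv : ∀ n, V n → ℝ≥0∞,
        (∀ (n : ℕ) (x : PathSp src rng),
          μ (cylSet src rng x n) = μv (n + 1) (rng n (x.1 n))) →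
        (∀ v : V 0, μv 0 v = μ {y : PathSp src rng | src 0 (y.1 0) = v}) →
        ∀ (n : ℕ) (w : V n),
          μv n w = ∑' v : V (n + 1), Fmat src rng n v w * μv (n + 1) v) ∧
    (∀ μv : ∀ n, V n → ℝ≥0∞,
      (∀ (n : ℕ) (w : V n),
        μv n w = ∑' v : V (n + 1), Fmat src rng n v w * μv (n + 1) v) →
      (∀ (n : ℕ) (v : V n), μv n v ≠ ⊤) →
      ∃! μ : Measure (PathSp src rng), TailInv src rng μ ∧
        ∀ (n : ℕ) (x : PathSp src rng),
          μ (cylSet src rng x n) = μv (n + 1) (rng n (x.1 n))) := by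
  refine ⟨fun μ _ _ μv hcyl h0 => Bratteli.eq_tsum_Fmat_of_measure_cylSet hs hfin hr μ μv hcyl h0,
    fun μv hrec htop => ?_⟩
  obtain ⟨μ, hμ⟩ := Bratteli.exists_measure_cylSet_eq hs hfin hrec htop
  refine ⟨μ, ⟨fun n x y hxy => by rw [hμ, hμ, hxy], hμ⟩, fun ν ⟨_, hν⟩ => ?_⟩
  exact Bratteli.ext_of_cylSet (fun n x => by rw [hν, hμ]) fun x => by rw [hν]; exact htop _ _

/-- (forward) If `μ` is a tail invariant (probability) measure on the
path-space of a generalized Bratteli diagram, then the vectors `μv n` of cylinder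
measures satisfy `Fmatᵀ • μv (n+1) = μv n`.  (converse) Any sequence of nonnegative
vectors with `Fmatᵀ • μv (n+1) = μv n` (and finite entries) determines a unique tail
invariant measure with those cylinder values. -/
theorem tail_invariant_measures_correspond_to_vector_sequences
    {V E : ℕ → Type*} [∀ n, Countable (V n)] [∀ n, Countable (E n)]
    [∀ n, MeasurableSpace (E n)] [∀ n, DiscreteMeasurableSpace (E n)]
    (src : ∀ n, E n → V n) (rng : ∀ n, E n → V (n + 1))
    (hfin : ∀ (n : ℕ) (v : V (n + 1)), Finite {e : E n // rng n e = v})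
    (hr : ∀ (n : ℕ) (v : V (n + 1)), ∃ e : E n, rng n e = v)
    (hs : ∀ (n : ℕ) (v : V n), ∃ e : E n, src n e = v) :
    (∀ μ : Measure (PathSp src rng), IsProbabilityMeasure μ → TailInv src rng μ →
      ∀ μv : ∀ n, V n → ℝ≥0∞,
        (∀ (n : ℕ) (x : PathSp src rng),
          μ (cylSet src rng x n) = μv (n + 1) (rng n (x.1 n))) →
        (∀ v : V 0, μv 0 v = μ {y : PathSp src rng | src 0 (y.1 0) = v}) →
        ∀ (n : ℕ) (w : V n),
          μv n w = ∑' v : V (n + 1), Fmat src rng n v w * μv (n + 1) v) ∧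
    (∀ μv : ∀ n, V n → ℝ≥0∞,
      (∀ (n : ℕ) (w : V n),
        μv n w = ∑' v : V (n + 1), Fmat src rng n v w * μv (n + 1) v) →
      (∀ (n : ℕ) (v : V n), μv n v ≠ ⊤) →
      ∃! μ : Measure (PathSp src rng), TailInv src rng μ ∧
        ∀ (n : ℕ) (x : PathSp src rng),
          μ (cylSet src rng x n) = μv (n + 1) (rng n (x.1 n))) :=
  tail_invariant_measures_correspond_to_vector_sequences_general src rng hfin hr hs
end

section
/- Let B be a stationary generalized Bratteli diagram whose transposed incidence matrix A = Fᵀ is irreducible, aperiodic and recurrent with Perron–Frobenius eigenvalue λ and strictly positive right eigenvector t = (t_v) satisfying At = λt. Then the assignment μ([ē(w,v)]) = t_v / λⁿ⁻¹ for any finite path ē from w ∈ V₀ to v ∈ Vₙ satisfies the Kolmogorov consistency condition and defines a tail invariant (σ-finite) measure on the path-space. The measure μ is finite if and only if ∑_v t_v < ∞. -/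
open scoped ENNReal
open MeasureTheory

/-- Path-space of a stationary generalized Bratteli diagram: all levels are copies of the
vertex set `V` and the edge set `E` with source map `s` and range map `r`. -/
abbrev StPath {V E : Type*} (s r : E → V) : Type _ :=
  {x : ℕ → E // ∀ n, r (x n) = s (x (n + 1))}

/-- The cylinder set of all infinite paths agreeing with `x` on edges `0, …, n`. -/
def cylSt {V E : Type*} (s r : E → V) (x : StPath s r) (n : ℕ) : Set (StPath s r) :=
  {y | ∀ i ≤ n, y.1 i = x.1 i}

/-- Tail invariance: cylinder sets of the same length with the same terminal vertex
have the same measure. -/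
def TailInvSt {V E : Type*} [MeasurableSpace E] (s r : E → V)
    (μ : Measure (StPath s r)) : Prop :=
  ∀ (n : ℕ) (x y : StPath s r), r (x.1 n) = r (y.1 n) →
    μ (cylSt s r x n) = μ (cylSt s r y n)

/-!
Dividing the eigenvector equation by `λ t_w` turns `p(e) = t (r e) / (λ t (s e))` into a
probability distribution on the edges leaving each vertex. The measure is the Markov chain on
edges with these transitions, started at the edge `e₀` with weight `t (r e₀)`: along a path the
cylinder mass `t (r x₀) ∏ p(x_{i+1})` telescopes to `t (r xₙ) / λⁿ`, and the total mass is
`∑_e t (r e) = λ ∑_v t v`. The chain is realised as the image of a product of independent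
choices `ω (n, v) ∈ {e | s e = v}` (the edge taken at step `n + 1` from vertex `v`), so that by
independence cylinder probabilities are products.
-/

theorem ENNReal.mul_prod_div_mul_eq_div_pow {a : ℕ → ℝ≥0∞} (ha0 : ∀ i, a i ≠ 0)
    (haT : ∀ i, a i ≠ ⊤) (c : ℝ≥0∞) (n : ℕ) :
    a 0 * ∏ i ∈ Finset.range n, a (i + 1) / (c * a i) = a n / c ^ n := by
  induction n with
  | zero => simp
  | succ n ih =>
    rw [Finset.prod_range_succ, ← mul_assoc, ih, div_eq_mul_inv, div_eq_mul_inv, div_eq_mul_inv,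
      ENNReal.mul_inv (.inr (haT n)) (.inr (ha0 n)), ENNReal.inv_pow, ENNReal.inv_pow, pow_succ]
    calc a n * c⁻¹ ^ n * (a (n + 1) * (c⁻¹ * (a n)⁻¹))
        = a (n + 1) * (c⁻¹ ^ n * c⁻¹) * (a n * (a n)⁻¹) := by ring
      _ = a (n + 1) * (c⁻¹ ^ n * c⁻¹) := by
          rw [ENNReal.mul_inv_cancel (ha0 n) (haT n), mul_one]

namespace StationaryBratteli

open Finset

variable {V E : Type*} (s r : E → V)

def choicePath (e₀ : E) (ω : (i : ℕ × V) → {e : E // s e = i.2}) : ℕ → E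
  | 0 => e₀
  | n + 1 => (ω (n, r (choicePath e₀ ω n))).1

def choiceStPath (e₀ : E) (ω : (i : ℕ × V) → {e : E // s e = i.2}) : StPath s r :=
  ⟨choicePath s r e₀ ω, fun n => (ω (n, r (choicePath s r e₀ ω n))).2.symm⟩

lemma choiceStPath_mem_cylSt_iff (e₀ : E) (ω : (i : ℕ × V) → {e : E // s e = i.2})
    (x : StPath s r) (n : ℕ) :
    choiceStPath s r e₀ ω ∈ cylSt s r x n ↔
      x.1 0 = e₀ ∧ ∀ i < n, (ω (i, r (x.1 i))).1 = x.1 (i + 1) := by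
  induction n with
  | zero => simp [cylSt, choiceStPath, choicePath, eq_comm]
  | succ n ih =>
    have hcyl_succ : choiceStPath s r e₀ ω ∈ cylSt s r x (n + 1) ↔
        choiceStPath s r e₀ ω ∈ cylSt s r x n ∧
          choicePath s r e₀ ω (n + 1) = x.1 (n + 1) := by
      simp only [cylSt, Set.mem_ofPred_eq, choiceStPath, Nat.le_succ_iff_eq_or_le]
      grind
    have hstep (hx : choiceStPath s r e₀ ω ∈ cylSt s r x n) :
        choicePath s r e₀ ω (n + 1) = (ω (n, r (x.1 n))).1 := by
      rw [choicePath, show choicePath s r e₀ ω n = x.1 n from hx n le_rfl]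
    rw [hcyl_succ]
    constructor
    · rintro ⟨hx, hlast⟩
      refine ⟨(ih.1 hx).1, fun i hi => ?_⟩
      rcases Nat.lt_succ_iff_lt_or_eq.1 hi with hi | rfl
      · exact (ih.1 hx).2 i hi
      · rwa [← hstep hx]
    · rintro ⟨h0, hlt⟩
      have hx := ih.2 ⟨h0, fun i hi => hlt i (Nat.lt_succ_of_lt hi)⟩
      exact ⟨hx, (hstep hx).trans (hlt n n.lt_succ_self)⟩

section Markov

variable [MeasurableSpace E] [DiscreteMeasurableSpace E]

lemma measurableSet_cylSt (x : StPath s r) (n : ℕ) : MeasurableSet (cylSt s r x n) := by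
  have : cylSt s r x n = ⋂ i ∈ Set.Iic n, (fun y : StPath s r => y.1 i) ⁻¹' {x.1 i} := by
    ext y
    simp [cylSt]
  rw [this]
  exact MeasurableSet.biInter (Set.to_countable _) fun i _ =>
    (measurable_pi_apply i).comp measurable_subtype_coe (MeasurableSet.singleton _)

variable [Countable E]

lemma measurable_choicePath (e₀ : E) (n : ℕ) :
    Measurable fun ω : (i : ℕ × V) → {e : E // s e = i.2} => choicePath s r e₀ ω n := by
  induction n with
  | zero => exact measurable_const
  | succ n ih =>
    have hstep : Measurable fun p : ((i : ℕ × V) → {e : E // s e = i.2}) × E =>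
        (p.1 (n, r p.2)).1 :=
      measurable_from_prod_countable_left fun e => by
        dsimp only
        exact (measurable_pi_apply (n, r e)).subtype_val
    exact hstep.comp (measurable_id.prodMk ih)

lemma measurable_choiceStPath (e₀ : E) : Measurable (choiceStPath s r e₀) :=
  (measurable_pi_lambda _ (measurable_choicePath s r e₀)).subtype_mk

variable (q : E → ℝ≥0∞) (hq : ∀ v, ∑' e : {e : E // s e = v}, q e = 1)

noncomputable def transitionPMF (v : V) : PMF {e : E // s e = v} :=
  ⟨fun e => q e, ENNReal.summable.hasSum_iff.2 (hq v)⟩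

noncomputable def markovMeasure (e₀ : E) : Measure (StPath s r) :=
  (Measure.infinitePi fun i : ℕ × V => (transitionPMF s q hq i.2).toMeasure).map
    (choiceStPath s r e₀)

lemma markovMeasure_univ (e₀ : E) : markovMeasure s r q hq e₀ Set.univ = 1 := by
  rw [markovMeasure, Measure.map_apply (measurable_choiceStPath s r e₀) MeasurableSet.univ,
    Set.preimage_univ, measure_univ]

lemma markovMeasure_cylSt (x : StPath s r) (n : ℕ) :
    markovMeasure s r q hq (x.1 0) (cylSt s r x n) = ∏ i ∈ range n, q (x.1 (i + 1)) := by
  let visit : ℕ ↪ ℕ × V := ⟨fun i => (i, r (x.1 i)), fun i j h => congrArg Prod.fst h⟩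
  have hpre : choiceStPath s r (x.1 0) ⁻¹' cylSt s r x n =
      Set.pi ↑((range n).map visit) fun j => {e | e.1 = x.1 (j.1 + 1)} := by
    ext ω
    simp only [Set.mem_preimage, choiceStPath_mem_cylSt_iff, coe_map, Set.mem_pi,
      Set.forall_mem_image, coe_range, Set.mem_Iio, true_and]
    rfl
  rw [markovMeasure,
    Measure.map_apply (measurable_choiceStPath s r _) (measurableSet_cylSt s r x n), hpre,
    Measure.infinitePi_pi _ fun _ _ => .of_discrete, prod_map]
  refine prod_congr rfl fun i _ => ?_
  change (transitionPMF s q hq (r (x.1 i))).toMeasure {e | e.1 = x.1 (i + 1)} = _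
  have hsingleton : {e : {e : E // s e = r (x.1 i)} | e.1 = x.1 (i + 1)} =
      {⟨x.1 (i + 1), (x.2 i).symm⟩} := by
    ext e
    simp [Subtype.ext_iff]
  rw [hsingleton, PMF.toMeasure_apply_singleton _ _ (measurableSet_singleton _)]
  rfl

lemma markovMeasure_cylSt_of_ne {e₀ : E} {x : StPath s r} (h : x.1 0 ≠ e₀) (n : ℕ) :
    markovMeasure s r q hq e₀ (cylSt s r x n) = 0 := by
  have hpre : choiceStPath s r e₀ ⁻¹' cylSt s r x n = ∅ := by
    ext ω
    simp [choiceStPath_mem_cylSt_iff, h]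
  rw [markovMeasure,
    Measure.map_apply (measurable_choiceStPath s r e₀) (measurableSet_cylSt s r x n), hpre,
    measure_empty]

variable (w : E → ℝ≥0∞)

noncomputable def weightedMarkovMeasure : Measure (StPath s r) :=
  Measure.sum fun e₀ => w e₀ • markovMeasure s r q hq e₀

lemma weightedMarkovMeasure_cylSt (x : StPath s r) (n : ℕ) :
    weightedMarkovMeasure s r q hq w (cylSt s r x n) =
      w (x.1 0) * ∏ i ∈ range n, q (x.1 (i + 1)) := by
  rw [weightedMarkovMeasure, Measure.sum_apply _ (measurableSet_cylSt s r x n),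
    tsum_eq_single (x.1 0) fun e₀ he₀ => by
      rw [Measure.smul_apply, markovMeasure_cylSt_of_ne s r q hq (Ne.symm he₀), smul_zero],
    Measure.smul_apply, markovMeasure_cylSt, smul_eq_mul]

lemma weightedMarkovMeasure_univ :
    weightedMarkovMeasure s r q hq w Set.univ = ∑' e, w e := by
  simp only [weightedMarkovMeasure, Measure.sum_apply _ MeasurableSet.univ, Measure.smul_apply,
    markovMeasure_univ, smul_eq_mul, mul_one]

end Markov

section PerronFrobenius

variable (lam : ℝ≥0∞) (t : V → ℝ≥0∞)

noncomputable def pfWeight (e : E) : ℝ≥0∞ := t (r e) / (lam * t (s e))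

variable {s r lam t}

lemma tsum_pfWeight (hlam0 : lam ≠ 0) (hlamT : lam ≠ ⊤) (ht0 : ∀ v, t v ≠ 0)
    (htT : ∀ v, t v ≠ ⊤)
    (heig : ∀ v, ∑' e : {e : E // s e = v}, t (r e.1) = lam * t v) (v : V) :
    ∑' e : {e : E // s e = v}, pfWeight s r lam t e = 1 := by
  have hweight (e : {e : E // s e = v}) : pfWeight s r lam t e = t (r e) * (lam * t v)⁻¹ := by
    rw [pfWeight, e.2, div_eq_mul_inv]
  rw [tsum_congr hweight, ENNReal.tsum_mul_right, heig,
    ENNReal.mul_inv_cancel (mul_ne_zero hlam0 (ht0 v)) (ENNReal.mul_ne_top hlamT (htT v))]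

lemma tsum_comp_r (heig : ∀ v, ∑' e : {e : E // s e = v}, t (r e.1) = lam * t v) :
    ∑' e, t (r e) = lam * ∑' v, t v := by
  rw [← ENNReal.tsum_fiberwise _ s, ← ENNReal.tsum_mul_left]
  exact tsum_congr heig

lemma div_pow_eq_tsum_div_pow_succ (hlam0 : lam ≠ 0) (hlamT : lam ≠ ⊤)
    (heig : ∀ v, ∑' e : {e : E // s e = v}, t (r e.1) = lam * t v) (v : V) (n : ℕ) :
    t v / lam ^ n = ∑' e : {e : E // s e = v}, t (r e.1) / lam ^ (n + 1) := by
  simp only [div_eq_mul_inv, ENNReal.tsum_mul_right]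
  rw [heig, ← div_eq_mul_inv, ← div_eq_mul_inv, pow_succ',
    ENNReal.mul_div_mul_left _ _ hlam0 hlamT]

variable [MeasurableSpace E] [DiscreteMeasurableSpace E] [Countable E]

lemma weightedMarkovMeasure_pfWeight_cylSt
    (hq : ∀ v, ∑' e : {e : E // s e = v}, pfWeight s r lam t e = 1)
    (ht0 : ∀ v, t v ≠ 0) (htT : ∀ v, t v ≠ ⊤) (x : StPath s r) (n : ℕ) :
    weightedMarkovMeasure s r (pfWeight s r lam t) hq (fun e => t (r e)) (cylSt s r x n) =
      t (r (x.1 n)) / lam ^ n := by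
  have hweight (i : ℕ) :
      pfWeight s r lam t (x.1 (i + 1)) = t (r (x.1 (i + 1))) / (lam * t (r (x.1 i))) := by
    rw [pfWeight, ← x.2 i]
  simp only [weightedMarkovMeasure_cylSt, hweight]
  exact ENNReal.mul_prod_div_mul_eq_div_pow (a := fun i => t (r (x.1 i))) (fun _ => ht0 _)
    (fun _ => htT _) lam n

end PerronFrobenius

end StationaryBratteli

open StationaryBratteli

theorem stationary_PF_tail_invariant_measure_general
    {V E : Type*} [Countable E]
    [MeasurableSpace E] [DiscreteMeasurableSpace E]
    (s r : E → V)
    (lam : ℝ≥0∞) (hlam0 : 0 < lam) (hlamT : lam ≠ ⊤)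
    (t : V → ℝ≥0∞) (ht0 : ∀ v, 0 < t v) (htT : ∀ v, t v ≠ ⊤)
    (heig : ∀ w : V, ∑' e : {e : E // s e = w}, t (r e.1) = lam * t w) :
    (∀ (x : StPath s r) (n : ℕ),
      t (r (x.1 n)) / lam ^ n
        = ∑' e : {e : E // s e = r (x.1 n)}, t (r e.1) / lam ^ (n + 1)) ∧
    ∃ μ : Measure (StPath s r), TailInvSt s r μ ∧
      (∀ (x : StPath s r) (n : ℕ), μ (cylSt s r x n) = t (r (x.1 n)) / lam ^ n) ∧
      (IsFiniteMeasure μ ↔ (∑' v : V, t v) ≠ ⊤) := by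
  have ht0' v : t v ≠ 0 := (ht0 v).ne'
  have hq := tsum_pfWeight hlam0.ne' hlamT ht0' htT heig
  have hcyl := weightedMarkovMeasure_pfWeight_cylSt hq ht0' htT
  refine ⟨fun x n => div_pow_eq_tsum_div_pow_succ hlam0.ne' hlamT heig _ n,
    weightedMarkovMeasure s r _ hq fun e => t (r e),
    fun n x y h => by rw [hcyl, hcyl, h], hcyl, ?_⟩
  rw [isFiniteMeasure_iff, weightedMarkovMeasure_univ, tsum_comp_r heig, lt_top_iff_ne_top]
  simp [ENNReal.mul_eq_top, hlam0.ne', hlamT]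

/-- On a stationary generalized Bratteli diagram whose transposed incidence
matrix has a Perron–Frobenius eigenvalue `lam` with strictly positive right eigenvector `t`
(expressed edgewise: `∑_{e : s e = w} t (r e) = lam * t w`), the assignment
`μ([ē(w,v)]) = t v / lam ^ (n-1)` (for our cylinders of `n+1` edges ending at level `n+1`,
the value `t (r (x n)) / lam ^ n`) satisfies the Kolmogorov consistency condition and
defines a tail invariant measure on the path-space; the measure is finite
iff `∑ v, t v < ∞`. -/
theorem stationary_PF_tail_invariant_measure
    {V E : Type*} [Countable V] [Countable E]
    [MeasurableSpace E] [DiscreteMeasurableSpace E]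
    (s r : E → V)
    (hfin : ∀ v : V, Finite {e : E // r e = v})
    (hr : ∀ v : V, ∃ e : E, r e = v) (hs : ∀ v : V, ∃ e : E, s e = v)
    (lam : ℝ≥0∞) (hlam0 : 0 < lam) (hlamT : lam ≠ ⊤)
    (t : V → ℝ≥0∞) (ht0 : ∀ v, 0 < t v) (htT : ∀ v, t v ≠ ⊤)
    (heig : ∀ w : V, ∑' e : {e : E // s e = w}, t (r e.1) = lam * t w) :
    (∀ (x : StPath s r) (n : ℕ),
      t (r (x.1 n)) / lam ^ n
        = ∑' e : {e : E // s e = r (x.1 n)}, t (r e.1) / lam ^ (n + 1)) ∧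
    ∃ μ : Measure (StPath s r), TailInvSt s r μ ∧
      (∀ (x : StPath s r) (n : ℕ), μ (cylSt s r x n) = t (r (x.1 n)) / lam ^ n) ∧
      (IsFiniteMeasure μ ↔ (∑' v : V, t v) ≠ ⊤) :=
  stationary_PF_tail_invariant_measure_general s r lam hlam0 hlamT t ht0 htT heig
end

section
/- Let B be a generalized Bratteli diagram with the equal column sum property, Fₙ ∈ ECS(cₙ). Then the sequence of vectors μ⁽ⁿ⁾ with constant entries μ⁽ⁿ⁾_v = (c₀ c₁ ⋯ cₙ₋₁)⁻¹ satisfies Fₙᵀ μ⁽ⁿ⁺¹⁾ = μ⁽ⁿ⁾, and hence defines a tail invariant measure on the path-space. -/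
open scoped ENNReal
open MeasureTheory

/-!
The column sum of `Fₙ` at `w` is the number of edges leaving `w`, so every vertex of level `n`
has exactly `cₙ` outgoing edges, and the matrix identity is `cₙ · (c₀ ⋯ cₙ)⁻¹ = (c₀ ⋯ cₙ₋₁)⁻¹`.

A path is determined by its first edge together with a choice, at every vertex of positive
level, of the edge along which to leave it. Give each first edge weight `c₀⁻¹` and choose the
outgoing edge at every vertex uniformly and independently. A path passes through `n` distinct
vertices at levels `1, …, n`, so the cylinder of its first `n + 1` edges has measure
`c₀⁻¹ c₁⁻¹ ⋯ cₙ⁻¹`, independently of the path; in particular the measure is tail invariant.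
-/

open ProbabilityTheory

lemma ENNReal.mul_inv_prod_range_succ (f : ℕ → ℝ≥0∞) {n : ℕ} (h0 : f n ≠ 0) (hT : f n ≠ ⊤) :
    f n * (∏ m ∈ Finset.range (n + 1), f m)⁻¹ = (∏ m ∈ Finset.range n, f m)⁻¹ := by
  rw [Finset.prod_range_succ, ENNReal.mul_inv (Or.inr hT) (Or.inr h0), mul_left_comm,
    ENNReal.mul_inv_cancel h0 hT, mul_one]

lemma ProbabilityTheory.uniformOn_univ_singleton {Ω : Type*} [MeasurableSpace Ω]
    [MeasurableSingletonClass Ω] (ω : Ω) :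
    uniformOn (Set.univ : Set Ω) {ω} = (ENat.card Ω : ℝ≥0∞)⁻¹ := by
  rw [uniformOn, cond_apply MeasurableSet.univ, Set.univ_inter, Measure.count_singleton,
    Measure.count_univ, mul_one]

section BratteliPaths

variable {V E : ℕ → Type*} (src : ∀ n, E n → V n) (rng : ∀ n, E n → V (n + 1))

lemma tsum_Fmat_eq_card_src_fiber {n : ℕ} (hfin : ∀ v, Finite {e : E n // rng n e = v})
    (w : V n) : ∑' v, Fmat src rng n v w = ENat.card {e : E n // src n e = w} := by
  rw [← ENNReal.tsum_one,
    ← (Equiv.sigmaFiberEquiv fun e : {e // src n e = w} ↦ rng n e).tsum_eq, ENNReal.tsum_sigma']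
  refine tsum_congr fun v ↦ ?_
  have hfe : {e : {e // src n e = w} // rng n e = v} ≃ {e : E n // src n e = w ∧ rng n e = v} :=
    Equiv.subtypeSubtypeEquivSubtypeInter (fun e ↦ src n e = w) (fun e ↦ rng n e = v)
  have : Finite {e : E n // src n e = w ∧ rng n e = v} :=
    have := hfin v
    Finite.of_injective _ (Subtype.impEmbedding _ _ fun _ h ↦ h.2).injective
  rw [ENNReal.tsum_one, ENat.card_congr hfe, ENat.card_eq_coe_natCard, ENat.toENNReal_coe, Fmat]

abbrev EdgeChoice : Type _ := ∀ p : Σ n, V (n + 1), {e : E (p.1 + 1) // src (p.1 + 1) e = p.2}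

def followChoices (e₀ : E 0) (σ : EdgeChoice src) : ∀ n, E n
  | 0 => e₀
  | n + 1 => σ ⟨n, rng n (followChoices e₀ σ n)⟩

def choicePath (ω : E 0 × EdgeChoice src) : PathSp src rng :=
  ⟨followChoices src rng ω.1 ω.2,
    fun n ↦ (ω.2 ⟨n, rng n (followChoices src rng ω.1 ω.2 n)⟩).2.symm⟩

lemma mem_cylSet_succ {x y : PathSp src rng} {n : ℕ} :
    y ∈ cylSet src rng x (n + 1) ↔ y ∈ cylSet src rng x n ∧ y.1 (n + 1) = x.1 (n + 1) := by
  simp only [cylSet, Set.mem_ofPred_eq, Nat.le_succ_iff, or_imp, forall_and, forall_eq]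

lemma choicePath_mem_cylSet_iff (ω : E 0 × EdgeChoice src) (x : PathSp src rng) (n : ℕ) :
    choicePath src rng ω ∈ cylSet src rng x n ↔
      ω.1 = x.1 0 ∧ ∀ i < n, (ω.2 ⟨i, rng i (x.1 i)⟩ : E (i + 1)) = x.1 (i + 1) := by
  induction n with
  | zero => simp [cylSet, choicePath, followChoices]
  | succ n ih =>
    have hnext : choicePath src rng ω ∈ cylSet src rng x n →
        (choicePath src rng ω).1 (n + 1) = ω.2 ⟨n, rng n (x.1 n)⟩ := fun h ↦ by
      simp only [choicePath, followChoices]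
      rw [← h n le_rfl]
      rfl
    rw [mem_cylSet_succ, Nat.forall_lt_succ_right]
    constructor
    · rintro ⟨hcyl, hlast⟩
      exact ⟨(ih.mp hcyl).1, (ih.mp hcyl).2, (hnext hcyl).symm.trans hlast⟩
    · rintro ⟨h0, hlt, hlast⟩
      have hcyl := ih.mpr ⟨h0, hlt⟩
      exact ⟨hcyl, (hnext hcyl).trans hlast⟩

def pathVertex (x : PathSp src rng) (i : ℕ) : Σ n, V (n + 1) := ⟨i, rng i (x.1 i)⟩

lemma pathVertex_injective (x : PathSp src rng) : Function.Injective (pathVertex src rng x) :=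
  fun _ _ h ↦ congrArg Sigma.fst h

lemma choicePath_preimage_cylSet (x : PathSp src rng) (n : ℕ) :
    choicePath src rng ⁻¹' cylSet src rng x n =
      {x.1 0} ×ˢ
        ((Finset.range n).map ⟨_, pathVertex_injective src rng x⟩ : Set (Σ n, V (n + 1))).pi
          fun p ↦ Subtype.val ⁻¹' {x.1 (p.1 + 1)} := by
  ext ω
  simp [choicePath_mem_cylSet_iff, pathVertex]

variable [∀ n, MeasurableSpace (E n)]

lemma measurableSet_cylSet [∀ n, MeasurableSingletonClass (E n)] (x : PathSp src rng) (n : ℕ) :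
    MeasurableSet (cylSet src rng x n) := by
  simp only [cylSet, Set.ofPred_forall]
  exact .iInter fun i ↦ .iInter fun _ ↦
    (measurable_pi_apply i |>.comp measurable_subtype_coe) (measurableSet_singleton _)

lemma measurable_choicePath [∀ n, Countable (E n)] [∀ n, MeasurableSingletonClass (E n)] :
    Measurable (choicePath src rng) := by
  refine .subtype_mk (measurable_pi_lambda _ fun n ↦ ?_)
  induction n with
  | zero => exact measurable_fst
  | succ n ih =>
    have hstep : Measurable (β := E (n + 1)) fun q : (E 0 × EdgeChoice src) × E n ↦
        (q.1.2 ⟨n, rng n q.2⟩).1 := by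
      refine measurable_from_prod_countable_left fun e ↦ ?_
      exact (measurable_pi_apply (X := fun p : Σ n, V (n + 1) ↦ {e // src (p.1 + 1) e = p.2})
        ⟨n, rng n e⟩).subtype_val.comp measurable_snd
    exact hstep.comp (measurable_id.prodMk ih)

noncomputable def choiceMeasure
    [∀ n (w : V (n + 1)), Finite {e : E (n + 1) // src (n + 1) e = w}]
    [∀ n (w : V (n + 1)), Nonempty {e : E (n + 1) // src (n + 1) e = w}] (a : ℝ≥0∞) :
    Measure (PathSp src rng) :=
  ((a • Measure.count).prod (Measure.infinitePi fun p : Σ n, V (n + 1) ↦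
    uniformOn (Set.univ : Set {e : E (p.1 + 1) // src (p.1 + 1) e = p.2}))).map
    (choicePath src rng)

lemma choiceMeasure_cylSet [∀ n, Countable (E n)] [∀ n, MeasurableSingletonClass (E n)]
    [∀ n (w : V (n + 1)), Finite {e : E (n + 1) // src (n + 1) e = w}]
    [∀ n (w : V (n + 1)), Nonempty {e : E (n + 1) // src (n + 1) e = w}]
    (a : ℝ≥0∞) (x : PathSp src rng) (n : ℕ) :
    choiceMeasure src rng a (cylSet src rng x n) =
      a * ∏ i ∈ Finset.range n,
        (ENat.card {e : E (i + 1) // src (i + 1) e = rng i (x.1 i)} : ℝ≥0∞)⁻¹ := by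
  rw [choiceMeasure, Measure.map_apply (measurable_choicePath src rng)
    (measurableSet_cylSet src rng x n), choicePath_preimage_cylSet, Measure.prod_prod,
    Measure.smul_apply, Measure.count_singleton, smul_eq_mul, mul_one,
    Measure.infinitePi_pi (μ := fun _ ↦ uniformOn Set.univ)
      fun _ _ ↦ measurable_subtype_coe (measurableSet_singleton _), Finset.prod_map]
  refine congrArg _ (Finset.prod_congr rfl fun i _ ↦ ?_)
  let y : {e // src (i + 1) e = rng i (x.1 i)} := ⟨x.1 (i + 1), (x.2 i).symm⟩
  have hsingleton : Subtype.val ⁻¹' {y.1} = {y} := Set.ext fun _ ↦ Subtype.ext_iff.symm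
  exact (congrArg (uniformOn Set.univ) hsingleton).trans (uniformOn_univ_singleton y)

end BratteliPaths

theorem ECS_constant_vectors_give_tail_invariant_measure_general
    {V E : ℕ → Type*} [∀ n, Countable (E n)]
    [∀ n, MeasurableSpace (E n)] [∀ n, DiscreteMeasurableSpace (E n)]
    (src : ∀ n, E n → V n) (rng : ∀ n, E n → V (n + 1))
    (hfin : ∀ (n : ℕ) (v : V (n + 1)), Finite {e : E n // rng n e = v})
    (c : ℕ → ℝ≥0∞) (hc0 : ∀ n, c n ≠ 0) (hcT : ∀ n, c n ≠ ⊤)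
    (hECS : ∀ (n : ℕ) (w : V n), ∑' v : V (n + 1), Fmat src rng n v w = c n) :
    (∀ (n : ℕ) (w : V n),
      ∑' v : V (n + 1), Fmat src rng n v w * (∏ m ∈ Finset.range (n + 1), c m)⁻¹
        = (∏ m ∈ Finset.range n, c m)⁻¹) ∧
    ∃ μ : Measure (PathSp src rng), TailInv src rng μ ∧
      ∀ (x : PathSp src rng) (n : ℕ),
        μ (cylSet src rng x n) = (∏ m ∈ Finset.range (n + 1), c m)⁻¹ := by
  refine ⟨fun n w ↦ ?_, ?_⟩
  · rw [ENNReal.tsum_mul_right, hECS n w]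
    exact ENNReal.mul_inv_prod_range_succ c (hc0 n) (hcT n)
  have hdeg (n : ℕ) (w : V n) : (ENat.card {e : E n // src n e = w} : ℝ≥0∞) = c n :=
    (tsum_Fmat_eq_card_src_fiber src rng (hfin n) w).symm.trans (hECS n w)
  have (n : ℕ) (w : V (n + 1)) : Finite {e : E (n + 1) // src (n + 1) e = w} :=
    ENat.card_lt_top.mp (ENat.toENNReal_lt_top.mp (hdeg (n + 1) w ▸ (hcT (n + 1)).lt_top))
  have (n : ℕ) (w : V (n + 1)) : Nonempty {e : E (n + 1) // src (n + 1) e = w} :=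
    (ENat.card_ne_zero_iff_nonempty _).mp fun h ↦
      hc0 (n + 1) (by simpa [h] using (hdeg _ w).symm)
  have hcyl (x : PathSp src rng) (n : ℕ) :
      choiceMeasure src rng (c 0)⁻¹ (cylSet src rng x n) =
        (∏ m ∈ Finset.range (n + 1), c m)⁻¹ := by
    rw [choiceMeasure_cylSet, ENNReal.prod_inv_distrib fun i _ _ _ _ ↦ Or.inl (hc0 i),
      Finset.prod_range_succ', mul_comm]
    simp only [hdeg]
  exact ⟨_, fun n x y _ ↦ (hcyl x n).trans (hcyl y n).symm, hcyl⟩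

/-- On a generalized Bratteli diagram with the equal column sum property
`Fₙ ∈ ECS(cₙ)`, the vectors with constant entries `μ⁽ⁿ⁾_v = (c₀ c₁ ⋯ cₙ₋₁)⁻¹` satisfy
`Fₙᵀ μ⁽ⁿ⁺¹⁾ = μ⁽ⁿ⁾`, and hence define a tail invariant measure on the path-space
(whose cylinder sets of paths ending at level `n+1` have measure `(c₀ ⋯ cₙ)⁻¹`). -/
theorem ECS_constant_vectors_give_tail_invariant_measure
    {V E : ℕ → Type*} [∀ n, Countable (V n)] [∀ n, Countable (E n)]
    [∀ n, MeasurableSpace (E n)] [∀ n, DiscreteMeasurableSpace (E n)]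
    (src : ∀ n, E n → V n) (rng : ∀ n, E n → V (n + 1))
    (hfin : ∀ (n : ℕ) (v : V (n + 1)), Finite {e : E n // rng n e = v})
    (hrsur : ∀ (n : ℕ) (v : V (n + 1)), ∃ e : E n, rng n e = v)
    (hssur : ∀ (n : ℕ) (v : V n), ∃ e : E n, src n e = v)
    (c : ℕ → ℝ≥0∞) (hc0 : ∀ n, c n ≠ 0) (hcT : ∀ n, c n ≠ ⊤)
    (hECS : ∀ (n : ℕ) (w : V n), ∑' v : V (n + 1), Fmat src rng n v w = c n) :
    (∀ (n : ℕ) (w : V n),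
      ∑' v : V (n + 1), Fmat src rng n v w * (∏ m ∈ Finset.range (n + 1), c m)⁻¹
        = (∏ m ∈ Finset.range n, c m)⁻¹) ∧
    ∃ μ : Measure (PathSp src rng), TailInv src rng μ ∧
      ∀ (x : PathSp src rng) (n : ℕ),
        μ (cylSet src rng x n) = (∏ m ∈ Finset.range (n + 1), c m)⁻¹ :=
  ECS_constant_vectors_give_tail_invariant_measure_general src rng hfin c hc0 hcT hECS
end
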